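/- arXiv:1711.03503 — 4 statements merged into one kernel-verified Lean document; each statement's English description precedes it below -/
import Mathlib

section
/- Let A be a real n×n matrix, B a real n×m matrix, Θ a real antisymmetric n×n matrix, and J a real antisymmetric m×m matrix, such that A Θ + Θ Aᵀ + B J Bᵀ = 0. If A is Hurwitz (all eigenvalues have negative real part) and P := ∫₀^∞ e^{tA} B Bᵀ e^{tAᵀ} dt, then the complex Hermitian matrix P + iΘ is positive semi-definite, provided I_m + iJ is positive semi-definite. -/
/-!
If every eigenvalue `μ` of `A` has `Re μ < 0`, then every eigenvalue `e^μ` of `e^A` lies in the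
open unit disc, so by Gelfand's formula some power `‖e^{kA}‖` is `< 1`, and the semigroup
property gives exponential decay of `‖e^{tA}‖`. Hence the Lyapunov equation
`AΘ + ΘAᵀ + BJBᵀ = 0` integrates, via `d/dt (e^{tA} Θ e^{tAᵀ}) = -e^{tA} BJBᵀ e^{tAᵀ}`, to
`Θ = ∫₀^∞ e^{tA} BJBᵀ e^{tAᵀ} dt`. So `P + iΘ = ∫₀^∞ (e^{tA}B) Ω (e^{tA}B)ᴴ dt` with
`Ω = 1 + iJ ⪰ 0`, an integral of positive semidefinite matrices.
-/

open Matrix MeasureTheory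
open scoped ComplexOrder

noncomputable def mexp {n : ℕ} (A : Matrix (Fin n) (Fin n) ℝ) : Matrix (Fin n) (Fin n) ℝ :=
  NormedSpace.exp A

def Hurwitz {n : ℕ} (A : Matrix (Fin n) (Fin n) ℝ) : Prop :=
  ∀ μ ∈ spectrum ℂ (A.map Complex.ofReal), μ.re < 0

open NormedSpace Filter Topology
open scoped Matrix.Norms.Frobenius

namespace Matrix

variable {ι : Type*} [Fintype ι] [DecidableEq ι]

theorem exp_mulVec_of_mulVec_eq_smul {𝕂 : Type*} [RCLike 𝕂] {M : Matrix ι ι 𝕂} {μ : 𝕂}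
    {v : ι → 𝕂} (h : M *ᵥ v = μ • v) : exp M *ᵥ v = exp μ • v := by
  have hpow : ∀ k : ℕ, M ^ k *ᵥ v = μ ^ k • v := by
    intro k
    induction k with
    | zero => simp
    | succ k ih => rw [pow_succ', ← mulVec_mulVec, ih, mulVec_smul, h, smul_smul, ← pow_succ]
  have hM := (exp_series_hasSum_exp' (𝕂 := 𝕂) M).map (mulVec.addMonoidHomLeft v)
    (continuous_id.matrix_mulVec continuous_const)
  have hμ := (exp_series_hasSum_exp' (𝕂 := 𝕂) μ).smul_const v
  refine hM.unique ?_
  convert hμ using 2 with k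
  change ((k.factorial : 𝕂)⁻¹ • M ^ k) *ᵥ v = _
  rw [smul_mulVec, hpow, smul_smul, smul_eq_mul]

theorem exists_exp_eq_of_mem_spectrum_exp (M : Matrix ι ι ℂ) {z : ℂ}
    (hz : z ∈ spectrum ℂ (exp M)) : ∃ μ ∈ spectrum ℂ M, Complex.exp μ = z := by
  rw [← spectrum_toLin'] at hz
  have hcomm : Commute (toLin' (exp M)) (toLin' M) := by
    rw [Commute, SemiconjBy, Module.End.mul_eq_comp, Module.End.mul_eq_comp, ← toLin'_mul,
      ← toLin'_mul, (Commute.refl M).exp_left.eq]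
  have : Nontrivial (Module.End.eigenspace (toLin' (exp M)) z) :=
    Submodule.nontrivial_iff_ne_bot.mpr (Module.End.hasEigenvalue_iff_mem_spectrum.mpr hz)
  obtain ⟨μ, hμ⟩ := Module.End.exists_eigenvalue
    ((toLin' M).restrict (Module.End.mapsTo_genEigenspace_of_comm hcomm z 1))
  obtain ⟨w, hw⟩ := hμ.exists_hasEigenvector
  have hw0 : (w : ι → ℂ) ≠ 0 := by simpa using hw.2
  have hMw : M *ᵥ w = μ • (w : ι → ℂ) := congrArg Subtype.val hw.apply_eq_smul
  have hEw : exp M *ᵥ w = z • (w : ι → ℂ) := by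
    simpa using Module.End.mem_eigenspace_iff.mp w.2
  refine ⟨μ, ?_, smul_left_injective ℂ hw0 ?_⟩
  · rw [← spectrum_toLin']
    exact (Module.End.hasEigenvalue_of_hasEigenvector
      ⟨Module.End.mem_eigenspace_iff.mpr (by simpa using hMw), hw0⟩).mem_spectrum
  · simp only [← exp_mulVec_of_mulVec_eq_smul hMw, ← hEw, Complex.exp_eq_exp_ℂ]

end Matrix

theorem exists_norm_pow_lt_one_of_spectralRadius_lt_one {𝔸 : Type*} [NormedRing 𝔸]
    [NormedAlgebra ℂ 𝔸] [CompleteSpace 𝔸] {a : 𝔸} (ha : spectralRadius ℂ a < 1) :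
    ∃ k : ℕ, 0 < k ∧ ‖a ^ k‖ < 1 := by
  obtain ⟨k, hk, hk0⟩ :=
    (((spectrum.pow_nnnorm_pow_one_div_tendsto_nhds_spectralRadius a).eventually
      (gt_mem_nhds ha)).and (eventually_gt_atTop 0)).exists
  refine ⟨k, hk0, ?_⟩
  by_contra! h
  exact hk.not_ge (ENNReal.one_le_rpow (by exact_mod_cast h) (by positivity))

theorem exists_norm_exp_smul_le_of_norm_exp_lt_one {𝔸 : Type*} [NormedRing 𝔸]
    [NormedAlgebra ℝ 𝔸] [NormedAlgebra ℚ 𝔸] [CompleteSpace 𝔸] {x : 𝔸} (hx : ‖exp x‖ < 1) :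
    ∃ C ε : ℝ, 0 < ε ∧ ∀ t : ℝ, 0 ≤ t → ‖exp (t • x)‖ ≤ C * Real.exp (-ε * t) := by
  set q := max ‖exp x‖ 2⁻¹
  have hq0 : 0 < q := lt_max_of_lt_right (by norm_num)
  have hq1 : q < 1 := max_lt hx (by norm_num)
  obtain ⟨K, hK⟩ := (isCompact_Icc (a := (0 : ℝ)) (b := 1)).exists_bound_of_continuousOn
    (f := fun s : ℝ => exp (s • x))
    (exp_continuous.comp (continuous_id.smul continuous_const)).continuousOn
  have hK0 : 0 ≤ K := (norm_nonneg _).trans (hK 0 ⟨le_rfl, zero_le_one⟩)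
  have hstep : ∀ N : ℕ, ∀ s ∈ Set.Icc (0 : ℝ) 1, ‖exp ((s + N) • x)‖ ≤ K * q ^ N := by
    intro N s hs
    induction N with
    | zero => simpa using hK s hs
    | succ N ih =>
      have hsplit : (s + (N + 1 : ℕ)) • x = x + (s + N) • x := by push_cast; module
      rw [hsplit, NormedSpace.exp_add_of_commute ((Commute.refl x).smul_right _)]
      calc ‖exp x * exp ((s + N) • x)‖ ≤ q * (K * q ^ N) :=
            (norm_mul_le _ _).trans
              (mul_le_mul (le_max_left _ _) ih (norm_nonneg _) hq0.le)
        _ = K * q ^ (N + 1) := by ring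
  refine ⟨K / q, -Real.log q, neg_pos.mpr (Real.log_neg hq0 hq1), fun t ht => ?_⟩
  set N := ⌊t⌋₊
  have hN : (N : ℝ) ≤ t := Nat.floor_le ht
  have hN' : t < N + 1 := Nat.lt_floor_add_one t
  have hqN : q ^ (N + 1) ≤ Real.exp (-(-Real.log q) * t) := by
    rw [neg_neg, ← Real.rpow_def_of_pos hq0, ← Real.rpow_natCast]
    exact Real.rpow_le_rpow_of_exponent_ge hq0 hq1.le (by push_cast; linarith)
  calc ‖exp (t • x)‖ = ‖exp ((t - N + N) • x)‖ := by rw [sub_add_cancel]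
    _ ≤ K * q ^ N := hstep N (t - N) ⟨by linarith, by linarith⟩
    _ = K / q * q ^ (N + 1) := by field_simp; ring
    _ ≤ K / q * Real.exp (-(-Real.log q) * t) := by gcongr

theorem Matrix.exists_norm_exp_smul_le {ι : Type*} [Fintype ι] [DecidableEq ι]
    (M : Matrix ι ι ℂ) (hM : ∀ μ ∈ spectrum ℂ M, μ.re < 0) :
    ∃ C ε : ℝ, 0 < ε ∧ ∀ t : ℝ, 0 ≤ t → ‖exp (t • M)‖ ≤ C * Real.exp (-ε * t) := by
  have hρ : spectralRadius ℂ (exp M) < 1 := by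
    rcases (spectrum ℂ (exp M)).eq_empty_or_nonempty with h | h
    · simp [spectralRadius, h]
    simpa using spectrum.spectralRadius_lt_of_forall_lt_of_nonempty h (r := 1) fun z hz => by
      obtain ⟨μ, hμ, rfl⟩ := M.exists_exp_eq_of_mem_spectrum_exp hz
      rw [← NNReal.coe_lt_coe, coe_nnnorm, Complex.norm_exp, NNReal.coe_one, Real.exp_lt_one_iff]
      exact hM μ hμ
  obtain ⟨k, hk, hk1⟩ := exists_norm_pow_lt_one_of_spectralRadius_lt_one hρ
  rw [← Matrix.exp_nsmul, ← Nat.cast_smul_eq_nsmul ℝ] at hk1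
  obtain ⟨C, ε, hε, hC⟩ := exists_norm_exp_smul_le_of_norm_exp_lt_one hk1
  refine ⟨C, ε / k, by positivity, fun t ht => ?_⟩
  have hkpos : (0 : ℝ) < k := by exact_mod_cast hk
  calc ‖exp (t • M)‖ = ‖exp ((t / k) • (k : ℝ) • M)‖ := by
        rw [smul_smul, div_mul_cancel₀ _ hkpos.ne']
    _ ≤ C * Real.exp (-ε * (t / k)) := hC _ (by positivity)
    _ = C * Real.exp (-(ε / k) * t) := by ring_nf

theorem mexp_map_ofReal {n : ℕ} (A : Matrix (Fin n) (Fin n) ℝ) :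
    (mexp A).map Complex.ofReal = exp (A.map Complex.ofReal) :=
  map_exp (Complex.ofRealHom.mapMatrix : Matrix (Fin n) (Fin n) ℝ →+* _)
    (continuous_id.matrix_map Complex.continuous_ofReal) A

theorem Hurwitz.exists_norm_mexp_smul_le {n : ℕ} {A : Matrix (Fin n) (Fin n) ℝ}
    (hA : Hurwitz A) :
    ∃ C ε : ℝ, 0 < ε ∧ ∀ t : ℝ, 0 ≤ t → ‖mexp (t • A)‖ ≤ C * Real.exp (-ε * t) := by
  obtain ⟨C, ε, hε, hC⟩ := (A.map Complex.ofReal).exists_norm_exp_smul_le hA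
  refine ⟨C, ε, hε, fun t ht => ?_⟩
  have hmap : (t • A).map Complex.ofReal = t • A.map Complex.ofReal :=
    Matrix.map_smul _ t (fun a => by simp) A
  rw [← frobenius_norm_map_eq _ Complex.ofReal Complex.norm_real, mexp_map_ofReal, hmap]
  exact hC t ht

theorem Matrix.norm_entry_le_frobenius_norm {m n α : Type*} [Fintype m] [Fintype n]
    [SeminormedAddCommGroup α] (A : Matrix m n α) (i : m) (j : n) : ‖A i j‖ ≤ ‖A‖ :=
  (PiLp.norm_apply_le (WithLp.toLp 2 fun j => A i j) j).trans
    (PiLp.norm_apply_le (WithLp.toLp 2 fun i => WithLp.toLp 2 fun j => A i j) i)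

section Lyapunov

variable {n : ℕ} {A : Matrix (Fin n) (Fin n) ℝ}

theorem mexp_smul_transpose (A : Matrix (Fin n) (Fin n) ℝ) (t : ℝ) :
    mexp (t • Aᵀ) = (mexp (t • A))ᵀ := by
  rw [mexp, mexp, ← transpose_smul, Matrix.exp_transpose]

theorem hasDerivAt_mexp_conj (A Θ : Matrix (Fin n) (Fin n) ℝ) (t : ℝ) :
    HasDerivAt (fun u : ℝ => mexp (u • A) * Θ * mexp (u • Aᵀ))
      (mexp (t • A) * (A * Θ + Θ * Aᵀ) * mexp (t • Aᵀ)) t := by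
  refine (((hasDerivAt_exp_smul_const A t).mul_const Θ).mul
    (hasDerivAt_exp_smul_const' Aᵀ t)).congr_deriv ?_
  simp only [mexp]
  noncomm_ring

theorem Hurwitz.exists_norm_mexp_conj_apply_le (hA : Hurwitz A) (K : Matrix (Fin n) (Fin n) ℝ) :
    ∃ C ε : ℝ, 0 < ε ∧ ∀ t : ℝ, 0 ≤ t → ∀ i j,
      ‖(mexp (t • A) * K * mexp (t • Aᵀ)) i j‖ ≤ C * Real.exp (-ε * t) := by
  obtain ⟨C, ε, hε, hC⟩ := hA.exists_norm_mexp_smul_le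
  refine ⟨C ^ 2 * ‖K‖, 2 * ε, by positivity, fun t ht i j => ?_⟩
  set X := mexp (t • A)
  have hX : ‖X‖ ≤ C * Real.exp (-ε * t) := hC t ht
  calc ‖(X * K * mexp (t • Aᵀ)) i j‖ ≤ ‖X * K * Xᵀ‖ := by
        rw [mexp_smul_transpose]; exact norm_entry_le_frobenius_norm _ i j
    _ ≤ ‖X‖ * ‖K‖ * ‖X‖ := by
        refine (norm_mul_le (X * K) Xᵀ).trans ?_
        rw [frobenius_norm_transpose]
        gcongr
        exact norm_mul_le X K
    _ ≤ C * Real.exp (-ε * t) * ‖K‖ * (C * Real.exp (-ε * t)) := by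
        have := (norm_nonneg X).trans hX
        gcongr
    _ = C ^ 2 * ‖K‖ * Real.exp (-(2 * ε) * t) := by
        rw [show -(2 * ε) * t = -ε * t + -ε * t by ring, Real.exp_add]; ring

theorem Hurwitz.integrableOn_mexp_conj_apply (hA : Hurwitz A) (K : Matrix (Fin n) (Fin n) ℝ)
    (i j : Fin n) :
    IntegrableOn (fun t : ℝ => (mexp (t • A) * K * mexp (t • Aᵀ)) i j) (Set.Ioi 0) := by
  obtain ⟨C, ε, hε, hC⟩ := hA.exists_norm_mexp_conj_apply_le K
  have hcont : Continuous fun t : ℝ => (mexp (t • A) * K * mexp (t • Aᵀ)) i j := by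
    simp only [mexp]
    fun_prop
  refine Integrable.mono' ((exp_neg_integrableOn_Ioi 0 hε).const_mul C)
    hcont.aestronglyMeasurable ?_
  filter_upwards [ae_restrict_mem measurableSet_Ioi] with t ht
  exact hC t (le_of_lt ht) i j

theorem Hurwitz.tendsto_mexp_conj_apply (hA : Hurwitz A) (K : Matrix (Fin n) (Fin n) ℝ)
    (i j : Fin n) :
    Tendsto (fun t : ℝ => (mexp (t • A) * K * mexp (t • Aᵀ)) i j) atTop (𝓝 0) := by
  obtain ⟨C, ε, hε, hC⟩ := hA.exists_norm_mexp_conj_apply_le K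
  have hdecay : Tendsto (fun t : ℝ => C * Real.exp (-ε * t)) atTop (𝓝 0) := by
    simpa using (Real.tendsto_exp_atBot.comp
      (tendsto_id.const_mul_atTop_of_neg (neg_lt_zero.mpr hε))).const_mul C
  refine squeeze_zero_norm' ?_ hdecay
  filter_upwards [eventually_ge_atTop 0] with t ht
  exact hC t ht i j

theorem Hurwitz.apply_eq_integral_of_lyapunov (hA : Hurwitz A) {Θ Q : Matrix (Fin n) (Fin n) ℝ}
    (hΘ : A * Θ + Θ * Aᵀ + Q = 0) (i j : Fin n) :
    Θ i j = ∫ t in Set.Ioi (0 : ℝ), (mexp (t • A) * Q * mexp (t • Aᵀ)) i j := by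
  have hderiv (t : ℝ) : HasDerivAt (fun u : ℝ => (mexp (u • A) * Θ * mexp (u • Aᵀ)) i j)
      (-(mexp (t • A) * Q * mexp (t • Aᵀ)) i j) t := by
    have := (entryLinearMap ℝ ℝ i j).toContinuousLinearMap.hasFDerivAt.comp_hasDerivAt t
      (hasDerivAt_mexp_conj A Θ t)
    rwa [eq_neg_of_add_eq_zero_left hΘ, mul_neg, neg_mul] at this
  have hftc := integral_Ioi_of_hasDerivAt_of_tendsto' (fun t _ => hderiv t)
    (hA.integrableOn_mexp_conj_apply Q i j).neg (hA.tendsto_mexp_conj_apply Θ i j)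
  simpa [integral_neg, mexp] using hftc.symm

end Lyapunov

theorem Matrix.PosSemidef.entrywise_integral {α ι 𝕜 : Type*} [RCLike 𝕜] [MeasurableSpace α]
    {μ : Measure α} [Fintype ι] {F : α → Matrix ι ι 𝕜} (hF : ∀ t, (F t).PosSemidef)
    (hint : ∀ i j, Integrable (fun t => F t i j) μ) :
    (of fun i j => ∫ t, F t i j ∂μ).PosSemidef := by
  refine .of_dotProduct_mulVec_nonneg ?_ fun x => ?_
  · ext i j
    simp only [conjTranspose_apply, of_apply, RCLike.star_def, ← integral_conj]
    exact integral_congr_ae (ae_of_all _ fun t => (hF t).1.apply i j)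
  · have hquad : star x ⬝ᵥ (of (fun i j => ∫ t, F t i j ∂μ) *ᵥ x)
        = ∫ t, star x ⬝ᵥ (F t *ᵥ x) ∂μ := by
      simp only [dotProduct, mulVec, of_apply]
      rw [integral_finsetSum _ fun i _ => (integrable_finsetSum _ fun j _ =>
        (hint i j).mul_const _).const_mul _]
      refine Finset.sum_congr rfl fun i _ => ?_
      rw [integral_const_mul, integral_finsetSum _ fun j _ => (hint i j).mul_const _]
      simp only [integral_mul_const]
    rw [hquad]
    exact integral_nonneg fun t => (hF t).dotProduct_mulVec_nonneg x

theorem Matrix.map_ofReal_mul_one_add_I_smul_mul_conjTranspose {n m : Type*} [Fintype m]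
    [DecidableEq m] (X : Matrix n m ℝ) (J : Matrix m m ℝ) :
    X.map Complex.ofReal * (1 + Complex.I • J.map Complex.ofReal) * (X.map Complex.ofReal)ᴴ
      = (X * Xᵀ).map Complex.ofReal + Complex.I • (X * J * Xᵀ).map Complex.ofReal := by
  have hH : (X.map Complex.ofReal)ᴴ = Xᵀ.map Complex.ofReal := by
    ext i j
    simp
  rw [hH]
  change X.map Complex.ofRealHom * (1 + Complex.I • J.map Complex.ofRealHom)
      * Xᵀ.map Complex.ofRealHom
    = (X * Xᵀ).map Complex.ofRealHom + Complex.I • (X * J * Xᵀ).map Complex.ofRealHom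
  simp only [Matrix.map_mul, Matrix.mul_add, Matrix.add_mul, Matrix.mul_one, Matrix.mul_smul,
    Matrix.smul_mul]

theorem stmt0_general {n m : ℕ} (A : Matrix (Fin n) (Fin n) ℝ) (B : Matrix (Fin n) (Fin m) ℝ)
    (Θ : Matrix (Fin n) (Fin n) ℝ) (J : Matrix (Fin m) (Fin m) ℝ)
    (hPR : A * Θ + Θ * Aᵀ + B * J * Bᵀ = 0)
    (hA : Hurwitz A)
    (hΩ : ((1 : Matrix (Fin m) (Fin m) ℂ) + Complex.I • J.map Complex.ofReal).PosSemidef)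
    (P : Matrix (Fin n) (Fin n) ℝ)
    (hP : P = Matrix.of fun i j =>
      ∫ t in Set.Ioi (0:ℝ), (mexp (t • A) * B * Bᵀ * mexp (t • Aᵀ)) i j) :
    (P.map Complex.ofReal + Complex.I • Θ.map Complex.ofReal).PosSemidef := by
  set S : Matrix (Fin n) (Fin n) ℝ → ℝ → Matrix (Fin n) (Fin n) ℝ :=
    fun K t => mexp (t • A) * K * mexp (t • Aᵀ)
  have hint := hA.integrableOn_mexp_conj_apply
  have hP' (i j : Fin n) : P i j = ∫ t in Set.Ioi (0 : ℝ), S (B * Bᵀ) t i j := by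
    simp only [hP, of_apply, S, Matrix.mul_assoc]
  have hΘ' := hA.apply_eq_integral_of_lyapunov hPR
  -- the entries of the integrand `e^{tA} B Ω Bᵀ e^{tAᵀ}` of `P + iΘ`
  set W : ℝ → Fin n → Fin n → ℂ := fun t i j =>
    S (B * Bᵀ) t i j + Complex.I * S (B * J * Bᵀ) t i j
  have hWpos (t : ℝ) : (of (W t)).PosSemidef := by
    convert hΩ.mul_mul_conjTranspose_same ((mexp (t • A) * B).map Complex.ofReal) using 1
    rw [map_ofReal_mul_one_add_I_smul_mul_conjTranspose]
    ext i j
    simp [W, S, transpose_mul, mexp_smul_transpose, Matrix.mul_assoc]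
  have hWint (i j : Fin n) : IntegrableOn (fun t => W t i j) (Set.Ioi 0) :=
    (hint _ i j).ofReal.add ((hint _ i j).ofReal.const_mul _)
  have hentries : P.map Complex.ofReal + Complex.I • Θ.map Complex.ofReal
      = of fun i j => ∫ t in Set.Ioi 0, W t i j := by
    ext i j
    simp only [of_apply, W]
    rw [integral_add (hint _ i j).ofReal ((hint _ i j).ofReal.const_mul _), integral_const_mul,
      integral_complex_ofReal, integral_complex_ofReal, ← hP', ← hΘ']
    rfl
  rw [hentries]
  exact PosSemidef.entrywise_integral hWpos hWint

theorem stmt0 {n m : ℕ} (A : Matrix (Fin n) (Fin n) ℝ) (B : Matrix (Fin n) (Fin m) ℝ)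
    (Θ : Matrix (Fin n) (Fin n) ℝ) (J : Matrix (Fin m) (Fin m) ℝ)
    (hΘ : Θᵀ = -Θ) (hJ : Jᵀ = -J)
    (hPR : A * Θ + Θ * Aᵀ + B * J * Bᵀ = 0)
    (hA : Hurwitz A)
    (hΩ : ((1 : Matrix (Fin m) (Fin m) ℂ) + Complex.I • J.map Complex.ofReal).PosSemidef)
    (P : Matrix (Fin n) (Fin n) ℝ)
    (hP : P = Matrix.of fun i j =>
      ∫ t in Set.Ioi (0:ℝ), (mexp (t • A) * B * Bᵀ * mexp (t • Aᵀ)) i j) :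
    (P.map Complex.ofReal + Complex.I • Θ.map Complex.ofReal).PosSemidef :=
  stmt0_general A B Θ J hPR hA hΩ P hP
end

section
/- Let A be a Hurwitz real n×n matrix and B a real n×m matrix. Then P := ∫₀^∞ e^{tA} B Bᵀ e^{tAᵀ} dt satisfies the algebraic Lyapunov equation A P + P Aᵀ + B Bᵀ = 0. -/
open Matrix MeasureTheory

/-!
Write `F t = exp (t A) Q exp (t Aᵀ)` with `Q = B Bᵀ`. Then `F' = A F + F Aᵀ` and `F 0 = Q`, so
integrating over `(0, ∞)` gives `A P + P Aᵀ = -Q` as soon as `F` decays exponentially. Nothing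
here is specific to matrices: it solves the Sylvester equation `a x + x b + q = 0` in any complete
normed `ℝ`-algebra.

The decay of `exp (t A)` is read off the generalized eigenspaces of the complexification `M` of
`A`: if `(M - μ)ᵏ v = 0` then `exp (t M) v = e^{tμ} ∑_{j<k} tʲ/j! (M - μ)ʲ v`, which is
`O(e^{-ct})` whenever `Re μ < -c`, and these eigenspaces span `ℂⁿ`.
-/

open NormedSpace Filter Asymptotics Set Topology
open scoped Nat

theorem integrableOn_Ioi_of_isBigO_exp_neg {E : Type*} [NormedAddCommGroup E] {f : ℝ → E}
    {a c : ℝ} (hc : 0 < c) (hf : ContinuousOn f (Ici a))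
    (ho : f =O[atTop] fun t => Real.exp (-c * t)) : IntegrableOn f (Ioi a) :=
  (integrableOn_Ici_iff_integrableOn_Ioi (by finiteness)).mp <|
    (hf.locallyIntegrableOn measurableSet_Ici).integrableOn_of_isBigO_atTop ho
      ⟨Ioi c, Ioi_mem_atTop c, exp_neg_integrableOn_Ioi c hc⟩

theorem tendsto_exp_neg_mul_atTop_nhds_zero {c : ℝ} (hc : 0 < c) :
    Tendsto (fun t : ℝ => Real.exp (-c * t)) atTop (𝓝 0) :=
  Real.tendsto_exp_atBot.comp (tendsto_id.const_mul_atTop_of_neg (neg_neg_iff_pos.2 hc))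

section Sylvester

variable {𝔸 : Type*} [NormedRing 𝔸] [NormedAlgebra ℝ 𝔸] {a b : 𝔸} {c : ℝ}

theorem isBigO_exp_smul_mul_mul_exp_smul (q : 𝔸)
    (ha : (fun t : ℝ => exp (t • a)) =O[atTop] fun t => Real.exp (-c * t))
    (hb : (fun t : ℝ => exp (t • b)) =O[atTop] fun _ => (1 : ℝ)) :
    (fun t : ℝ => exp (t • a) * q * exp (t • b)) =O[atTop] fun t => Real.exp (-c * t) := by
  simpa using (ha.mul (isBigO_const_one ℝ q atTop)).mul hb

variable [CompleteSpace 𝔸]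

theorem integrableOn_exp_smul_mul_mul_exp_smul (q : 𝔸) (hc : 0 < c)
    (ha : (fun t : ℝ => exp (t • a)) =O[atTop] fun t => Real.exp (-c * t))
    (hb : (fun t : ℝ => exp (t • b)) =O[atTop] fun _ => (1 : ℝ)) :
    IntegrableOn (fun t : ℝ => exp (t • a) * q * exp (t • b)) (Ioi 0) :=
  integrableOn_Ioi_of_isBigO_exp_neg hc
    (((differentiable_exp_smul_const ℝ a).continuous.mul continuous_const).mul
      (differentiable_exp_smul_const ℝ b).continuous).continuousOn
    (isBigO_exp_smul_mul_mul_exp_smul q ha hb)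

theorem sylvester_integral_of_isBigO (q : 𝔸) (hc : 0 < c)
    (ha : (fun t : ℝ => exp (t • a)) =O[atTop] fun t => Real.exp (-c * t))
    (hb : (fun t : ℝ => exp (t • b)) =O[atTop] fun _ => (1 : ℝ)) :
    a * (∫ t in Ioi (0 : ℝ), exp (t • a) * q * exp (t • b)) +
      (∫ t in Ioi (0 : ℝ), exp (t • a) * q * exp (t • b)) * b + q = 0 := by
  set F : ℝ → 𝔸 := fun t => exp (t • a) * q * exp (t • b)
  have hF_deriv : ∀ t, HasDerivAt F (a * F t + F t * b) t := fun t => by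
    convert ((hasDerivAt_exp_smul_const' a t).mul_const q).fun_mul
      (hasDerivAt_exp_smul_const b t) using 1
    simp only [F, mul_assoc]
  have hF_decay : F =O[atTop] fun t => Real.exp (-c * t) := isBigO_exp_smul_mul_mul_exp_smul q ha hb
  have hF_int : IntegrableOn F (Ioi 0) := integrableOn_exp_smul_mul_mul_exp_smul q hc ha hb
  have hF'_int : IntegrableOn (fun t => a * F t + F t * b) (Ioi 0) := by
    have hF_cont : Continuous F := continuous_iff_continuousAt.2 fun t => (hF_deriv t).continuousAt
    refine integrableOn_Ioi_of_isBigO_exp_neg hc (by fun_prop) ?_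
    refine (hF_decay.const_mul_left a).add ?_
    simpa using hF_decay.mul (isBigO_const_one ℝ b atTop)
  have hFTC : ∫ t in Ioi (0 : ℝ), (a * F t + F t * b) = 0 - F 0 :=
    integral_Ioi_of_hasDerivAt_of_tendsto' (fun t _ => hF_deriv t) hF'_int
      (hF_decay.trans_tendsto (tendsto_exp_neg_mul_atTop_nhds_zero hc))
  rw [integral_add (hF_int.const_mul a) (hF_int.mul_const b),
    integral_const_mul_of_integrable hF_int, integral_mul_const_of_integrable hF_int] at hFTC
  simp [F, hFTC]

end Sylvester

attribute [local instance] Matrix.linftyOpNormedAddCommGroup Matrix.linftyOpNormedSpace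
  Matrix.linftyOpNormedRing Matrix.linftyOpNormedAlgebra

section MatrixDecay

variable {ι : Type*} [Fintype ι] [DecidableEq ι]

theorem isBigO_of_forall_mulVec {𝕜 α : Type*} [NontriviallyNormedField 𝕜] [CompleteSpace 𝕜]
    {l : Filter α} {f : α → Matrix ι ι 𝕜} {g : α → ℝ} (h : ∀ v, (fun x => f x *ᵥ v) =O[l] g) :
    f =O[l] g := by
  let L : (ι → ι → 𝕜) →L[𝕜] Matrix ι ι 𝕜 := LinearMap.toContinuousLinearMap
    ((transposeLinearEquiv ι ι 𝕜 𝕜).toLinearMap : (ι → ι → 𝕜) →ₗ[𝕜] Matrix ι ι 𝕜)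
  have hf : f = fun x => L fun j => f x *ᵥ Pi.single j 1 := by
    ext x i j
    change f x i j = (f x *ᵥ Pi.single j 1) i
    simp
  rw [hf]
  exact (L.isBigO_comp _ _).trans (isBigO_pi.2 fun j => h _)

theorem Asymptotics.IsBigO.matrix_transpose {𝕜 α : Type*} [NontriviallyNormedField 𝕜]
    [CompleteSpace 𝕜] {l : Filter α} {f : α → Matrix ι ι 𝕜} {g : α → ℝ} (h : f =O[l] g) :
    (fun x => (f x)ᵀ) =O[l] g :=
  ((transposeLinearEquiv ι ι 𝕜 𝕜).toLinearMap.toContinuousLinearMap.isBigO_comp _ _).trans h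

theorem exp_mulVec_eq_sum_of_pow_mulVec_eq_zero {𝕂 : Type*} [RCLike 𝕂] (N : Matrix ι ι 𝕂)
    {v : ι → 𝕂} {k : ℕ} (hv : N ^ k *ᵥ v = 0) :
    exp N *ᵥ v = ∑ j ∈ Finset.range k, (j ! : 𝕂)⁻¹ • (N ^ j *ᵥ v) := by
  have hsum := (exp_series_hasSum_exp' (𝕂 := 𝕂) N).map (mulVec.addMonoidHomLeft v)
    (continuous_id.matrix_mulVec continuous_const)
  have hvanish : ∀ j ∉ Finset.range k, (j ! : 𝕂)⁻¹ • (N ^ j *ᵥ v) = 0 := fun j hj => by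
    obtain ⟨i, rfl⟩ := Nat.exists_eq_add_of_le (not_lt.1 (Finset.mem_range.not.1 hj))
    rw [add_comm, pow_add, ← mulVec_mulVec, hv, mulVec_zero, smul_zero]
  have := hsum.unique (hasSum_sum_of_ne_finset_zero (s := Finset.range k) fun j hj => by
    simpa [mulVec.addMonoidHomLeft, smul_mulVec] using hvanish j hj)
  simp only [mulVec.addMonoidHomLeft, Function.comp_apply, AddMonoidHom.coe_mk, ZeroHom.coe_mk,
    smul_mulVec] at this
  exact this

theorem exp_smul_mulVec_of_pow_sub_mulVec_eq_zero (M : Matrix ι ι ℂ) {μ : ℂ} {v : ι → ℂ} {k : ℕ}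
    (hv : (M - μ • 1) ^ k *ᵥ v = 0) (t : ℝ) :
    exp ((t : ℂ) • M) *ᵥ v = ∑ j ∈ Finset.range k,
      (Complex.exp (t * μ) * (t : ℂ) ^ j) • ((j ! : ℂ)⁻¹ • ((M - μ • 1) ^ j *ᵥ v)) := by
  have hsplit : (t : ℂ) • M = (t * μ) • 1 + (t : ℂ) • (M - μ • 1) := by
    rw [smul_sub, smul_smul]; abel
  have hcomm : Commute (((t : ℂ) * μ) • (1 : Matrix ι ι ℂ)) ((t : ℂ) • (M - μ • 1)) :=
    ((Commute.one_left _).smul_left _).smul_right _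
  have hscalar : exp (((t : ℂ) * μ) • (1 : Matrix ι ι ℂ)) = Complex.exp (t * μ) • 1 := by
    rw [← Algebra.algebraMap_eq_smul_one, ← Algebra.algebraMap_eq_smul_one, Complex.exp_eq_exp_ℂ]
    exact (algebraMap_exp_comm _).symm
  have hnil : ((t : ℂ) • (M - μ • 1)) ^ k *ᵥ v = 0 := by
    rw [smul_pow, smul_mulVec, hv, smul_zero]
  rw [hsplit, Matrix.exp_add_of_commute _ _ hcomm, hscalar, smul_mul_assoc, one_mul, smul_mulVec,
    exp_mulVec_eq_sum_of_pow_mulVec_eq_zero _ hnil, Finset.smul_sum]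
  refine Finset.sum_congr rfl fun j _ => ?_
  rw [smul_pow, smul_mulVec, smul_comm _ ((t : ℂ) ^ j), smul_smul, mul_smul]

theorem isBigO_cexp_mul_mul_pow {μ : ℂ} {c : ℝ} (hμ : μ.re < -c) (j : ℕ) :
    (fun t : ℝ => Complex.exp (t * μ) * (t : ℂ) ^ j) =O[atTop] fun t => Real.exp (-c * t) := by
  have hexp : (fun t : ℝ => Complex.exp (t * μ)) =O[atTop] fun t => Real.exp (μ.re * t) :=
    .of_norm_le fun t => by simp [Complex.norm_exp, mul_comm]
  have hpow : (fun t : ℝ => (t : ℂ) ^ j) =O[atTop] fun t => Real.exp ((-c - μ.re) * t) :=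
    isBigO_norm_left.1 <| by
      simpa using (isLittleO_pow_exp_pos_mul_atTop j (by linarith : 0 < -c - μ.re)).isBigO.norm_left
  refine (hexp.mul hpow).congr_right fun t => ?_
  rw [← Real.exp_add]; ring_nf

theorem isBigO_exp_smul_mulVec_of_mem_maxGenEigenspace (M : Matrix ι ι ℂ) {μ : ℂ} {c : ℝ}
    (hμ : μ.re < -c) {v : ι → ℂ} (hv : v ∈ Module.End.maxGenEigenspace (toLin' M) μ) :
    (fun t : ℝ => exp ((t : ℂ) • M) *ᵥ v) =O[atTop] fun t => Real.exp (-c * t) := by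
  obtain ⟨k, hk⟩ := (Module.End.mem_maxGenEigenspace _ _ _).1 hv
  have hk' : (M - μ • 1) ^ k *ᵥ v = 0 := by
    simpa [← Matrix.toLin'_apply, map_pow, map_sub, Module.End.one_eq_id] using hk
  simp_rw [exp_smul_mulVec_of_pow_sub_mulVec_eq_zero M hk']
  refine IsBigO.fun_sum fun j _ => ?_
  simpa only [smul_eq_mul, mul_one] using (isBigO_cexp_mul_mul_pow hμ j).smul
    (isBigO_const_one ℝ ((j ! : ℂ)⁻¹ • ((M - μ • 1) ^ j *ᵥ v)) atTop)

theorem isBigO_exp_smul_mulVec (M : Matrix ι ι ℂ) {c : ℝ}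
    (hM : ∀ μ ∈ spectrum ℂ M, μ.re < -c) (v : ι → ℂ) :
    (fun t : ℝ => exp ((t : ℂ) • M) *ᵥ v) =O[atTop] fun t => Real.exp (-c * t) := by
  have hv : v ∈ ⨆ μ, Module.End.maxGenEigenspace (toLin' M) μ := by
    rw [Module.End.iSup_maxGenEigenspace_eq_top]; trivial
  induction hv using Submodule.iSup_induction' with
  | mem μ w hw =>
    obtain rfl | hw0 := eq_or_ne w 0
    · simpa only [mulVec_zero] using isBigO_zero _ _
    refine isBigO_exp_smul_mulVec_of_mem_maxGenEigenspace M (hM μ ?_) hw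
    have : Module.End.HasUnifEigenvalue (toLin' M) μ ⊤ :=
      (Submodule.ne_bot_iff _).2 ⟨w, hw, hw0⟩
    rw [← spectrum_toLin', ← Module.End.hasEigenvalue_iff_mem_spectrum]
    exact this.lt zero_lt_one
  | zero => simpa only [mulVec_zero] using isBigO_zero _ _
  | add w₁ w₂ _ _ h₁ h₂ => simpa [mulVec_add] using h₁.add h₂

theorem isBigO_exp_smul_of_re_lt (M : Matrix ι ι ℂ) {c : ℝ}
    (hM : ∀ μ ∈ spectrum ℂ M, μ.re < -c) :
    (fun t : ℝ => exp ((t : ℂ) • M)) =O[atTop] fun t => Real.exp (-c * t) :=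
  isBigO_of_forall_mulVec (isBigO_exp_smul_mulVec M hM)

theorem linfty_opNorm_map_ofReal (X : Matrix ι ι ℝ) : ‖X.map Complex.ofReal‖ = ‖X‖ := by
  simp [linfty_opNorm_def]

theorem map_ofReal_exp (X : Matrix ι ι ℝ) :
    (exp X).map Complex.ofReal = exp (X.map Complex.ofReal) :=
  map_exp (Complex.ofRealHom.mapMatrix : Matrix ι ι ℝ →+* Matrix ι ι ℂ)
    (continuous_id.matrix_map Complex.continuous_ofReal) X

end MatrixDecay

theorem Hurwitz.exists_re_lt_neg {n : ℕ} {A : Matrix (Fin n) (Fin n) ℝ} (hA : Hurwitz A) :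
    ∃ c > 0, ∀ μ ∈ spectrum ℂ (A.map Complex.ofReal), μ.re < -c := by
  have h : ∀ᶠ c in 𝓝[>] (0 : ℝ), ∀ μ ∈ spectrum ℂ (A.map Complex.ofReal), μ.re < -c :=
    (Matrix.finite_spectrum _).eventually_all.2 fun μ hμ => nhdsWithin_le_nhds <|
      (continuous_neg.tendsto 0).eventually (eventually_gt_nhds (by simpa using hA μ hμ))
  exact (h.and self_mem_nhdsWithin).exists.imp fun c hc => ⟨hc.2, hc.1⟩

theorem Hurwitz.isBigO_exp_smul {n : ℕ} {A : Matrix (Fin n) (Fin n) ℝ} (hA : Hurwitz A) :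
    ∃ c > 0, (fun t : ℝ => exp (t • A)) =O[atTop] fun t => Real.exp (-c * t) := by
  obtain ⟨c, hc, hspec⟩ := hA.exists_re_lt_neg
  have h := isBigO_norm_left.2 (isBigO_exp_smul_of_re_lt _ hspec)
  refine ⟨c, hc, isBigO_norm_left.1 (h.congr_left fun t => ?_)⟩
  rw [← linfty_opNorm_map_ofReal, map_ofReal_exp]
  congr 2
  ext i j
  simp

theorem stmt2 {n m : ℕ} (A : Matrix (Fin n) (Fin n) ℝ) (B : Matrix (Fin n) (Fin m) ℝ)
    (hA : Hurwitz A)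
    (P : Matrix (Fin n) (Fin n) ℝ)
    (hP : P = Matrix.of fun i j =>
      ∫ t in Set.Ioi (0:ℝ), (mexp (t • A) * B * Bᵀ * mexp (t • Aᵀ)) i j) :
    A * P + P * Aᵀ + B * Bᵀ = 0 := by
  obtain ⟨c, hc, hdecay⟩ := hA.isBigO_exp_smul
  have hbounded : (fun t : ℝ => exp (t • Aᵀ)) =O[atTop] fun _ => (1 : ℝ) := by
    simpa only [← transpose_smul, exp_transpose] using
      hdecay.matrix_transpose.trans ((tendsto_exp_neg_mul_atTop_nhds_zero hc).isBigO_one ℝ)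
  have hP' : P = ∫ t in Ioi (0 : ℝ), exp (t • A) * (B * Bᵀ) * exp (t • Aᵀ) := by
    ext i j
    rw [hP, of_apply]
    refine Eq.trans ?_ ((entryLinearMap ℝ ℝ i j).toContinuousLinearMap.integral_comp_comm
      (integrableOn_exp_smul_mul_mul_exp_smul (B * Bᵀ) hc hdecay hbounded))
    simp only [mexp, Matrix.mul_assoc]
    rfl
  rw [hP']
  exact sylvester_integral_of_isBigO (B * Bᵀ) hc hdecay hbounded
end

section
/- Let A be a Hurwitz real n×n matrix, P ≻ 0 a real symmetric positive definite n×n matrix, Θ a real antisymmetric n×n matrix, Γ ≻ 0 a real symmetric matrix, and λ > 0 such that ‖Γ^{−1/2} e^{tA} Γ^{1/2}‖ ≤ e^{−λt} for all t ≥ 0. Let S be a d×n real matrix of full row rank, and define τ := (spectral radius of SΘΓ^{−1}ΘᵀSᵀ (SPΓ^{−1}PSᵀ)^{−1})^{1/2}. Then for all u ∈ ℝⁿ and w ∈ ℝ^d, the integral F(u,w) := 2 e^{−½(uᵀPu + wᵀSPSᵀw)} ∫₀^∞ Im e^{−uᵀe^{tA}(P+iΘ)Sᵀw} dt converges absolutely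 and satisfies |F(u,w)| ≤ (2τ/λ) e^{−½(uᵀPu + wᵀSPSᵀw)} (e^{‖u‖_Γ ‖PSᵀw‖_{Γ^{−1}}} − 1), where ‖x‖_M := (xᵀMx)^{1/2}. -/
open Matrix MeasureTheory

noncomputable def opNorm {m n : ℕ} (M : Matrix (Fin m) (Fin n) ℝ) : ℝ :=
  ‖LinearMap.toContinuousLinearMap (Matrix.toEuclideanLin M)‖

/-- Weighted quadratic norm ‖x‖_M = √(xᵀ M x). -/
noncomputable def qnorm {n : ℕ} (M : Matrix (Fin n) (Fin n) ℝ) (x : Fin n → ℝ) : ℝ :=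
  Real.sqrt (x ⬝ᵥ M.mulVec x)

/-- The integrand Im e^{−uᵀ e^{tA}(P+iΘ)Sᵀw}. -/
noncomputable def Fintegrand {n d : ℕ} (A P Θ : Matrix (Fin n) (Fin n) ℝ)
    (S : Matrix (Fin d) (Fin n) ℝ) (u : Fin n → ℝ) (w : Fin d → ℝ) (t : ℝ) : ℝ :=
  (Complex.exp (-((fun i => ((u i : ℝ) : ℂ)) ⬝ᵥ
    ((mexp (t • A)).map Complex.ofReal *
      (P.map Complex.ofReal + Complex.I • Θ.map Complex.ofReal) *
      (Sᵀ).map Complex.ofReal).mulVec (fun i => ((w i : ℝ) : ℂ))))).im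

/-!
Write the integrand as `-e^{-a(t)} sin b(t)` with `a = uᵀe^{tA}PSᵀw` and `b = uᵀe^{tA}ΘSᵀw`.
Conjugating `e^{tA}` by `Γ^{1/2}`, the contraction hypothesis gives
`|uᵀe^{tA}x| ≤ e^{-λt} ‖u‖_Γ ‖x‖_{Γ⁻¹}`. For `M₁` symmetric and `M₂ ≻ 0`, the matrix `M₁M₂⁻¹` is
similar to the symmetric `M₂^{-1/2} M₁ M₂^{-1/2}`, so `M₁ ≤ ρ(M₁M₂⁻¹) M₂` in the Loewner order;
with `M₁ = SΘΓ⁻¹ΘᵀSᵀ`, `M₂ = SPΓ⁻¹PSᵀ` this is `‖ΘSᵀw‖_{Γ⁻¹} ≤ τ ‖PSᵀw‖_{Γ⁻¹}`. Using `|sin b| ≤ |b|`,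
the integrand is dominated by `τ c e^{-λt} exp (c e^{-λt})` with `c = ‖u‖_Γ ‖PSᵀw‖_{Γ⁻¹}`,
an exact derivative whose integral over `(0, ∞)` is `τ (e^c - 1) / λ`.
-/

open Real Set Filter Topology

namespace Matrix

lemma dotProduct_mulVec_self {m n R : Type*} [Fintype m] [Fintype n] [CommSemiring R]
    (B : Matrix m n R) (x : n → R) : B *ᵥ x ⬝ᵥ B *ᵥ x = x ⬝ᵥ (Bᵀ * B) *ᵥ x := by
  rw [← mulVec_mulVec, dotProduct_mulVec, ← mulVec_transpose, dotProduct_comm]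

lemma dotProduct_mul_mul_transpose_mulVec {m n R : Type*} [Fintype m] [Fintype n]
    [CommSemiring R] (M : Matrix m n R) (G : Matrix n n R) (w : m → R) :
    w ⬝ᵥ (M * G * Mᵀ) *ᵥ w = Mᵀ *ᵥ w ⬝ᵥ G *ᵥ (Mᵀ *ᵥ w) := by
  rw [← mulVec_mulVec, ← mulVec_mulVec, dotProduct_mulVec, ← mulVec_transpose]

lemma vecMul_injective_of_rank_eq {m n K : Type*} [Fintype m] [Fintype n] [Field K]
    {A : Matrix m n K} (hA : A.rank = Fintype.card m) : Function.Injective A.vecMul := by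
  have hker : Module.finrank K (LinearMap.ker Aᵀ.mulVecLin) = 0 := by
    have := LinearMap.finrank_range_add_finrank_ker Aᵀ.mulVecLin
    rw [Module.finrank_fintype_fun_eq_card, ← rank, rank_transpose, hA] at this
    omega
  have hinj : Function.Injective Aᵀ.mulVecLin :=
    LinearMap.ker_eq_bot.mp (Submodule.finrank_eq_zero.mp hker)
  simpa [mulVec_transpose, coe_vecMulLinear] using hinj

section Spectrum

variable {ι : Type*} [Fintype ι] [DecidableEq ι]

lemma le_sSup_norm_spectrum_map_ofReal {M : Matrix ι ι ℝ} {x : ℝ} (hx : x ∈ spectrum ℝ M) :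
    x ≤ sSup ((fun μ => ‖μ‖) '' spectrum ℂ (M.map Complex.ofReal)) := by
  have hxC : (x : ℂ) ∈ spectrum ℂ (M.map Complex.ofReal) := by
    rw [mem_spectrum_iff_isRoot_charpoly] at hx ⊢
    have := hx.map (f := Complex.ofRealHom)
    rwa [← charpoly_map] at this
  calc x ≤ ‖(x : ℂ)‖ := by simpa using le_abs_self x
    _ ≤ _ := le_csSup ((finite_spectrum _).image _).bddAbove ⟨_, hxC, rfl⟩

open scoped MatrixOrder in
lemma le_smul_of_spectrum_mul_inv_le {M₁ M₂ : Matrix ι ι ℝ} (h₁ : M₁.IsHermitian)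
    (h₂ : M₂.PosDef) {σ : ℝ} (hσ : ∀ x ∈ spectrum ℝ (M₁ * M₂⁻¹), x ≤ σ) : M₁ ≤ σ • M₂ := by
  set B := CFC.sqrt M₂
  have hB : IsSelfAdjoint B := (CFC.sqrt_nonneg M₂).isSelfAdjoint
  have hBB : B * B = M₂ := CFC.sqrt_mul_sqrt_self M₂ h₂.posSemidef.nonneg
  have hdet : IsUnit B.det := (isUnit_iff_isUnit_det B).mp <|
    (CFC.isUnit_sqrt_iff M₂ h₂.posSemidef.nonneg).mpr h₂.isUnit
  have hBBi : B * B⁻¹ = 1 := mul_nonsing_inv B hdet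
  have hBiB : B⁻¹ * B = 1 := nonsing_inv_mul B hdet
  set C := B⁻¹ * M₁ * B⁻¹
  have hC : IsSelfAdjoint C := by
    have := h₁.isSelfAdjoint.conjugate B⁻¹
    rwa [hB.isHermitian.inv.isSelfAdjoint.star_eq] at this
  have hspec : spectrum ℝ C = spectrum ℝ (M₁ * M₂⁻¹) := by
    convert spectrum.units_conjugate' (u := nonsingInvUnit B hdet) using 2
    rw [← hBB]
    show C = B⁻¹ * (M₁ * (B * B)⁻¹) * B
    simp only [C, mul_inv_rev, Matrix.mul_assoc, hBiB, Matrix.mul_one]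
  have hCσ : C ≤ algebraMap ℝ _ σ := le_algebraMap_of_spectrum_le (hspec ▸ hσ)
  calc M₁ = B * C * B := by
        simp only [C, ← Matrix.mul_assoc, hBBi, Matrix.one_mul]
        simp only [Matrix.mul_assoc, hBiB, Matrix.mul_one]
    _ ≤ B * algebraMap ℝ _ σ * B := hB.conjugate_le_conjugate hCσ
    _ = σ • M₂ := by
      rw [Algebra.algebraMap_eq_smul_one, Matrix.mul_smul, Matrix.mul_one, Matrix.smul_mul, hBB]

end Spectrum

end Matrix

section MatrixExp

attribute [local instance] Matrix.linftyOpNormedRing Matrix.linftyOpNormedAlgebra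

lemma continuous_mexp_smul {n : ℕ} (A : Matrix (Fin n) (Fin n) ℝ) :
    Continuous fun t : ℝ => mexp (t • A) :=
  NormedSpace.exp_continuous.comp (continuous_id.smul continuous_const)

end MatrixExp

lemma EuclideanSpace.norm_toLp_eq_sqrt_dotProduct {ι : Type*} [Fintype ι] (x : ι → ℝ) :
    ‖WithLp.toLp 2 x‖ = √(x ⬝ᵥ x) := by
  rw [norm_eq_sqrt_real_inner, EuclideanSpace.inner_eq_star_dotProduct]
  simp

lemma abs_dotProduct_mulVec_le_opNorm {m n : ℕ} (M : Matrix (Fin m) (Fin n) ℝ)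
    (x : Fin m → ℝ) (y : Fin n → ℝ) :
    |x ⬝ᵥ M *ᵥ y| ≤ opNorm M * √(x ⬝ᵥ x) * √(y ⬝ᵥ y) := by
  set L := LinearMap.toContinuousLinearMap (toEuclideanLin M)
  set X := WithLp.toLp 2 x
  set Y := WithLp.toLp 2 y
  have hinner : x ⬝ᵥ M *ᵥ y = inner ℝ X (L Y) := by
    simp [X, Y, L, EuclideanSpace.inner_eq_star_dotProduct, dotProduct_comm]
  rw [hinner, ← EuclideanSpace.norm_toLp_eq_sqrt_dotProduct,
    ← EuclideanSpace.norm_toLp_eq_sqrt_dotProduct]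
  calc |inner ℝ X (L Y)| ≤ ‖X‖ * ‖L Y‖ := abs_real_inner_le_norm _ _
    _ ≤ ‖X‖ * (‖L‖ * ‖Y‖) := by gcongr; exact L.le_opNorm _
    _ = opNorm M * ‖X‖ * ‖Y‖ := by rw [opNorm]; ring

lemma qnorm_nonneg {n : ℕ} (M : Matrix (Fin n) (Fin n) ℝ) (x : Fin n → ℝ) : 0 ≤ qnorm M x :=
  Real.sqrt_nonneg _

lemma abs_dotProduct_mulVec_le_qnorm {n : ℕ} {Γ Γh : Matrix (Fin n) (Fin n) ℝ}
    (hΓh : Γh.IsHermitian) (hdet : IsUnit Γh.det) (hΓhsq : Γh * Γh = Γ)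
    (E : Matrix (Fin n) (Fin n) ℝ) (u x : Fin n → ℝ) :
    |u ⬝ᵥ E *ᵥ x| ≤ opNorm (Γh⁻¹ * E * Γh) * qnorm Γ u * qnorm Γ⁻¹ x := by
  have hsymm : Γhᵀ = Γh := hΓh
  have hsymm_inv : Γh⁻¹ᵀ = Γh⁻¹ := by rw [transpose_nonsing_inv, hsymm]
  have hqu : qnorm Γ u = √(Γh *ᵥ u ⬝ᵥ Γh *ᵥ u) := by
    rw [qnorm, dotProduct_mulVec_self, hsymm, hΓhsq]
  have hqx : qnorm Γ⁻¹ x = √(Γh⁻¹ *ᵥ x ⬝ᵥ Γh⁻¹ *ᵥ x) := by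
    rw [qnorm, dotProduct_mulVec_self, hsymm_inv, ← Matrix.mul_inv_rev, hΓhsq]
  have hconj : u ⬝ᵥ E *ᵥ x = Γh *ᵥ u ⬝ᵥ (Γh⁻¹ * E * Γh) *ᵥ (Γh⁻¹ *ᵥ x) := by
    rw [← vecMul_transpose Γh u, hsymm, ← dotProduct_mulVec, mulVec_mulVec, mulVec_mulVec,
      ← Matrix.mul_assoc, ← Matrix.mul_assoc, mul_nonsing_inv _ hdet, Matrix.one_mul,
      Matrix.mul_assoc, mul_nonsing_inv _ hdet, Matrix.mul_one]
  rw [hqu, hqx, hconj]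
  exact abs_dotProduct_mulVec_le_opNorm _ _ _

lemma abs_dotProduct_mexp_mulVec_le {n : ℕ} {A Γ Γh : Matrix (Fin n) (Fin n) ℝ} {lam : ℝ}
    (hΓh : Γh.PosDef) (hΓhsq : Γh * Γh = Γ)
    (hcontr : ∀ t ≥ (0 : ℝ), opNorm (Γh⁻¹ * mexp (t • A) * Γh) ≤ exp (-(lam * t)))
    (u x : Fin n → ℝ) {t : ℝ} (ht : 0 ≤ t) :
    |u ⬝ᵥ mexp (t • A) *ᵥ x| ≤ exp (-(lam * t)) * (qnorm Γ u * qnorm Γ⁻¹ x) := by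
  have hdet : IsUnit Γh.det := (isUnit_iff_isUnit_det Γh).mp hΓh.isUnit
  calc |u ⬝ᵥ mexp (t • A) *ᵥ x|
      ≤ opNorm (Γh⁻¹ * mexp (t • A) * Γh) * qnorm Γ u * qnorm Γ⁻¹ x :=
        abs_dotProduct_mulVec_le_qnorm hΓh.isHermitian hdet hΓhsq _ u x
    _ ≤ exp (-(lam * t)) * qnorm Γ u * qnorm Γ⁻¹ x := by
        gcongr
        · exact qnorm_nonneg _ _
        · exact qnorm_nonneg _ _
        · exact hcontr t ht
    _ = exp (-(lam * t)) * (qnorm Γ u * qnorm Γ⁻¹ x) := mul_assoc _ _ _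

open scoped MatrixOrder in
lemma qnorm_inv_mulVec_le_sqrt_sSup_mul {n d : ℕ} {P Θ Γ : Matrix (Fin n) (Fin n) ℝ}
    {S : Matrix (Fin d) (Fin n) ℝ} (hP : P.PosDef) (hΘ : Θᵀ = -Θ) (hΓ : Γ.PosDef)
    (hS : S.rank = d) (w : Fin d → ℝ) :
    qnorm Γ⁻¹ (Θ *ᵥ Sᵀ *ᵥ w) ≤
      √(sSup ((fun μ => ‖μ‖) '' spectrum ℂ
        ((S * Θ * Γ⁻¹ * Θᵀ * Sᵀ * (S * P * Γ⁻¹ * P * Sᵀ)⁻¹).map Complex.ofReal))) *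
      qnorm Γ⁻¹ (P *ᵥ Sᵀ *ᵥ w) := by
  have hPsymm : Pᵀ = P := hP.isHermitian
  have hM₁ : S * Θ * Γ⁻¹ * Θᵀ * Sᵀ = (S * Θ) * Γ⁻¹ * (S * Θ)ᵀ := by
    simp only [transpose_mul, Matrix.mul_assoc]
  have hM₂ : S * P * Γ⁻¹ * P * Sᵀ = (S * P) * Γ⁻¹ * (S * P)ᵀ := by
    simp only [transpose_mul, hPsymm, Matrix.mul_assoc]
  have hM₁herm : (S * Θ * Γ⁻¹ * Θᵀ * Sᵀ).IsHermitian :=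
    hM₁ ▸ isHermitian_mul_mul_conjTranspose (S * Θ) hΓ.inv.isHermitian
  have hM₂pd : (S * P * Γ⁻¹ * P * Sᵀ).PosDef := by
    rw [hM₂]
    refine hΓ.inv.mul_mul_conjTranspose_same ?_
    simpa [Function.comp_def, vecMul_vecMul] using (vecMul_injective_of_isUnit hP.isUnit).comp
      (vecMul_injective_of_rank_eq (hS.trans (Fintype.card_fin d).symm))
  have hle := (le_iff.mp <| le_smul_of_spectrum_mul_inv_le hM₁herm hM₂pd
    fun _ hx => le_sSup_norm_spectrum_map_ofReal hx).dotProduct_mulVec_nonneg w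
  set σ := sSup ((fun μ => ‖μ‖) '' spectrum ℂ
    ((S * Θ * Γ⁻¹ * Θᵀ * Sᵀ * (S * P * Γ⁻¹ * P * Sᵀ)⁻¹).map Complex.ofReal))
  have hquad : Θ *ᵥ Sᵀ *ᵥ w ⬝ᵥ Γ⁻¹ *ᵥ (Θ *ᵥ Sᵀ *ᵥ w) ≤
      σ * (P *ᵥ Sᵀ *ᵥ w ⬝ᵥ Γ⁻¹ *ᵥ (P *ᵥ Sᵀ *ᵥ w)) := by
    simp only [star_trivial, sub_mulVec, smul_mulVec, dotProduct_sub, dotProduct_smul,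
      smul_eq_mul, sub_nonneg] at hle
    rw [hM₁, hM₂, dotProduct_mul_mul_transpose_mulVec, dotProduct_mul_mul_transpose_mulVec] at hle
    simpa only [transpose_mul, hΘ, hPsymm, ← mulVec_mulVec, neg_mulVec, mulVec_neg,
      neg_dotProduct, dotProduct_neg, neg_neg] using hle
  have hσ : 0 ≤ σ := Real.sSup_nonneg (by rintro _ ⟨μ, -, rfl⟩; exact norm_nonneg μ)
  rw [qnorm, qnorm, ← Real.sqrt_mul hσ]
  exact Real.sqrt_le_sqrt hquad

lemma dotProduct_map_ofReal_mulVec {m k : ℕ} (M : Matrix (Fin m) (Fin k) ℝ) (u : Fin m → ℝ)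
    (w : Fin k → ℝ) :
    (fun i => (u i : ℂ)) ⬝ᵥ M.map Complex.ofReal *ᵥ (fun i => (w i : ℂ)) =
      ((u ⬝ᵥ M *ᵥ w : ℝ) : ℂ) := by
  simp only [dotProduct, mulVec, map_apply, Complex.ofReal_sum, Complex.ofReal_mul]

lemma Fintegrand_eq_neg_exp_mul_sin {n d : ℕ} (A P Θ : Matrix (Fin n) (Fin n) ℝ)
    (S : Matrix (Fin d) (Fin n) ℝ) (u : Fin n → ℝ) (w : Fin d → ℝ) (t : ℝ) :
    Fintegrand A P Θ S u w t =
      -(exp (-(u ⬝ᵥ mexp (t • A) *ᵥ (P *ᵥ Sᵀ *ᵥ w))) *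
        sin (u ⬝ᵥ mexp (t • A) *ᵥ (Θ *ᵥ Sᵀ *ᵥ w))) := by
  set E := mexp (t • A)
  have hmat : E.map Complex.ofReal *
      (P.map Complex.ofReal + Complex.I • Θ.map Complex.ofReal) * Sᵀ.map Complex.ofReal =
      (E * P * Sᵀ).map Complex.ofReal + Complex.I • (E * Θ * Sᵀ).map Complex.ofReal := by
    simp only [show (Complex.ofReal : ℝ → ℂ) = ⇑Complex.ofRealHom from rfl, Matrix.map_mul,
      Matrix.mul_add, Matrix.add_mul, Matrix.mul_smul, Matrix.smul_mul]
  have hdot (M : Matrix (Fin n) (Fin n) ℝ) :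
      u ⬝ᵥ E *ᵥ (M *ᵥ Sᵀ *ᵥ w) = u ⬝ᵥ (E * M * Sᵀ) *ᵥ w := by
    simp only [mulVec_mulVec, Matrix.mul_assoc]
  rw [Fintegrand, hmat, add_mulVec, dotProduct_add, smul_mulVec, dotProduct_smul,
    dotProduct_map_ofReal_mulVec, dotProduct_map_ofReal_mulVec, hdot, hdot, smul_eq_mul,
    Complex.exp_im]
  simp [Real.sin_neg]

lemma continuous_Fintegrand {n d : ℕ} (A P Θ : Matrix (Fin n) (Fin n) ℝ)
    (S : Matrix (Fin d) (Fin n) ℝ) (u : Fin n → ℝ) (w : Fin d → ℝ) :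
    Continuous (Fintegrand A P Θ S u w) := by
  have hE := continuous_mexp_smul A
  simp only [funext (Fintegrand_eq_neg_exp_mul_sin A P Θ S u w)]
  fun_prop

lemma abs_Fintegrand_le {n d : ℕ} {A P Θ Γ Γh : Matrix (Fin n) (Fin n) ℝ}
    {S : Matrix (Fin d) (Fin n) ℝ} {lam τ : ℝ} (hΓh : Γh.PosDef) (hΓhsq : Γh * Γh = Γ)
    (hcontr : ∀ t ≥ (0 : ℝ), opNorm (Γh⁻¹ * mexp (t • A) * Γh) ≤ exp (-(lam * t)))
    (u : Fin n → ℝ) (w : Fin d → ℝ)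
    (hτ : qnorm Γ⁻¹ (Θ *ᵥ Sᵀ *ᵥ w) ≤ τ * qnorm Γ⁻¹ (P *ᵥ Sᵀ *ᵥ w)) {t : ℝ} (ht : 0 ≤ t) :
    |Fintegrand A P Θ S u w t| ≤
      τ * (qnorm Γ u * qnorm Γ⁻¹ (P *ᵥ Sᵀ *ᵥ w) * exp (-(lam * t)) *
        exp (qnorm Γ u * qnorm Γ⁻¹ (P *ᵥ Sᵀ *ᵥ w) * exp (-(lam * t)))) := by
  set c := qnorm Γ u * qnorm Γ⁻¹ (P *ᵥ Sᵀ *ᵥ w)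
  set a := u ⬝ᵥ mexp (t • A) *ᵥ (P *ᵥ Sᵀ *ᵥ w)
  set b := u ⬝ᵥ mexp (t • A) *ᵥ (Θ *ᵥ Sᵀ *ᵥ w)
  have ha : |a| ≤ exp (-(lam * t)) * c := abs_dotProduct_mexp_mulVec_le hΓh hΓhsq hcontr _ _ ht
  have hb : |b| ≤ τ * (c * exp (-(lam * t))) :=
    calc |b| ≤ exp (-(lam * t)) * (qnorm Γ u * qnorm Γ⁻¹ (Θ *ᵥ Sᵀ *ᵥ w)) :=
          abs_dotProduct_mexp_mulVec_le hΓh hΓhsq hcontr _ _ ht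
      _ ≤ exp (-(lam * t)) * (qnorm Γ u * (τ * qnorm Γ⁻¹ (P *ᵥ Sᵀ *ᵥ w))) := by
          gcongr
          exact qnorm_nonneg _ _
      _ = τ * (c * exp (-(lam * t))) := by ring
  rw [Fintegrand_eq_neg_exp_mul_sin, abs_neg, abs_mul, abs_exp]
  calc exp (-a) * |sin b| ≤ exp (c * exp (-(lam * t))) * (τ * (c * exp (-(lam * t)))) := by
        gcongr
        · linarith [neg_le_abs a]
        · exact abs_sin_le_abs.trans hb
    _ = _ := by ring

lemma integrableOn_and_integral_Ioi_mul_exp_mul_exp {c lam : ℝ} (hc : 0 ≤ c) (hlam : 0 < lam) :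
    IntegrableOn (fun t => c * exp (-(lam * t)) * exp (c * exp (-(lam * t)))) (Ioi 0) ∧
    ∫ t in Ioi 0, c * exp (-(lam * t)) * exp (c * exp (-(lam * t))) = (exp c - 1) / lam := by
  set G := fun t : ℝ => -exp (c * exp (-(lam * t))) / lam
  have hderiv : ∀ t ∈ Ioi (0 : ℝ),
      HasDerivAt G (c * exp (-(lam * t)) * exp (c * exp (-(lam * t)))) t := by
    intro t _
    have hlin : HasDerivAt (fun t => -(lam * t)) (-lam) t := by
      simpa using ((hasDerivAt_id t).const_mul lam).fun_neg
    refine ((hlin.exp.const_mul c).exp.neg.div_const lam).congr_deriv ?_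
    field_simp
  have hcont : ContinuousWithinAt G (Ici 0) 0 := by
    apply Continuous.continuousWithinAt
    fun_prop
  have hnonneg : ∀ t ∈ Ioi (0 : ℝ), 0 ≤ c * exp (-(lam * t)) * exp (c * exp (-(lam * t))) :=
    fun t _ => by positivity
  have hlim : Tendsto G atTop (𝓝 (-exp (c * 0) / lam)) := by
    have hdecay : Tendsto (fun t => exp (-(lam * t))) atTop (𝓝 0) :=
      tendsto_exp_neg_atTop_nhds_zero.comp (tendsto_id.const_mul_atTop hlam)
    exact ((continuous_exp.tendsto _).comp (hdecay.const_mul c)).neg.div_const lam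
  refine ⟨integrableOn_Ioi_deriv_of_nonneg hcont hderiv hnonneg hlim, ?_⟩
  rw [integral_Ioi_of_hasDerivAt_of_nonneg hcont hderiv hnonneg hlim]
  simp only [G, mul_zero, neg_zero, exp_zero, mul_one]
  ring

theorem stmt11_general {n d : ℕ} (A P Θ Γ Γh : Matrix (Fin n) (Fin n) ℝ)
    (S : Matrix (Fin d) (Fin n) ℝ) (lam : ℝ) (hlam : 0 < lam)
    (hP : P.PosDef) (hΘ : Θᵀ = -Θ) (hΓ : Γ.PosDef)
    (hΓh : Γh.PosDef) (hΓhsq : Γh * Γh = Γ)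
    (hS : S.rank = d)
    (hcontr : ∀ t ≥ (0:ℝ), opNorm (Γh⁻¹ * mexp (t • A) * Γh) ≤ Real.exp (-(lam * t)))
    (τ : ℝ)
    (hτ : τ = Real.sqrt (sSup ((fun μ => ‖μ‖) ''
      spectrum ℂ ((S * Θ * Γ⁻¹ * Θᵀ * Sᵀ * (S * P * Γ⁻¹ * P * Sᵀ)⁻¹).map Complex.ofReal))))
    (u : Fin n → ℝ) (w : Fin d → ℝ) :
    IntegrableOn (Fintegrand A P Θ S u w) (Set.Ioi 0) ∧
    |2 * Real.exp (-(1/2) * (u ⬝ᵥ P.mulVec u + (Sᵀ.mulVec w) ⬝ᵥ P.mulVec (Sᵀ.mulVec w))) *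
        ∫ t in Set.Ioi (0:ℝ), Fintegrand A P Θ S u w t|
      ≤ (2 * τ / lam) *
          Real.exp (-(1/2) * (u ⬝ᵥ P.mulVec u + (Sᵀ.mulVec w) ⬝ᵥ P.mulVec (Sᵀ.mulVec w))) *
          (Real.exp (qnorm Γ u * qnorm Γ⁻¹ (P.mulVec (Sᵀ.mulVec w))) - 1) := by
  set c := qnorm Γ u * qnorm Γ⁻¹ (P *ᵥ Sᵀ *ᵥ w)
  set K := exp (-(1/2) * (u ⬝ᵥ P *ᵥ u + Sᵀ *ᵥ w ⬝ᵥ P *ᵥ Sᵀ *ᵥ w))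
  have hτw : qnorm Γ⁻¹ (Θ *ᵥ Sᵀ *ᵥ w) ≤ τ * qnorm Γ⁻¹ (P *ᵥ Sᵀ *ᵥ w) :=
    hτ ▸ qnorm_inv_mulVec_le_sqrt_sSup_mul hP hΘ hΓ hS w
  obtain ⟨hgint, hgval⟩ := integrableOn_and_integral_Ioi_mul_exp_mul_exp
    (mul_nonneg (qnorm_nonneg _ _) (qnorm_nonneg _ _) : 0 ≤ c) hlam
  have hbound : ∀ᵐ t ∂volume.restrict (Ioi 0), ‖Fintegrand A P Θ S u w t‖ ≤
      τ * (c * exp (-(lam * t)) * exp (c * exp (-(lam * t)))) :=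
    ae_restrict_of_forall_mem measurableSet_Ioi fun t ht =>
      abs_Fintegrand_le hΓh hΓhsq hcontr u w hτw ht.le
  refine ⟨(hgint.const_mul τ).mono' (continuous_Fintegrand ..).aestronglyMeasurable hbound, ?_⟩
  have hI : |∫ t in Ioi 0, Fintegrand A P Θ S u w t| ≤ τ * ((exp c - 1) / lam) := by
    simpa only [Real.norm_eq_abs, integral_const_mul, hgval] using
      norm_integral_le_of_norm_le (hgint.const_mul τ) hbound
  rw [abs_mul, abs_of_pos (by positivity : (0 : ℝ) < 2 * K)]
  calc 2 * K * |∫ t in Ioi 0, Fintegrand A P Θ S u w t|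
      ≤ 2 * K * (τ * ((exp c - 1) / lam)) := by gcongr
    _ = 2 * τ / lam * K * (exp c - 1) := by ring

theorem stmt11 {n d : ℕ} (A P Θ Γ Γh : Matrix (Fin n) (Fin n) ℝ)
    (S : Matrix (Fin d) (Fin n) ℝ) (lam : ℝ) (hlam : 0 < lam)
    (hA : Hurwitz A) (hP : P.PosDef) (hΘ : Θᵀ = -Θ) (hΓ : Γ.PosDef)
    (hΓh : Γh.PosDef) (hΓhsq : Γh * Γh = Γ)
    (hS : S.rank = d)
    (hcontr : ∀ t ≥ (0:ℝ), opNorm (Γh⁻¹ * mexp (t • A) * Γh) ≤ Real.exp (-(lam * t)))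
    (τ : ℝ)
    (hτ : τ = Real.sqrt (sSup ((fun μ => ‖μ‖) ''
      spectrum ℂ ((S * Θ * Γ⁻¹ * Θᵀ * Sᵀ * (S * P * Γ⁻¹ * P * Sᵀ)⁻¹).map Complex.ofReal))))
    (u : Fin n → ℝ) (w : Fin d → ℝ) :
    IntegrableOn (Fintegrand A P Θ S u w) (Set.Ioi 0) ∧
    |2 * Real.exp (-(1/2) * (u ⬝ᵥ P.mulVec u + (Sᵀ.mulVec w) ⬝ᵥ P.mulVec (Sᵀ.mulVec w))) *
        ∫ t in Set.Ioi (0:ℝ), Fintegrand A P Θ S u w t|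
      ≤ (2 * τ / lam) *
          Real.exp (-(1/2) * (u ⬝ᵥ P.mulVec u + (Sᵀ.mulVec w) ⬝ᵥ P.mulVec (Sᵀ.mulVec w))) *
          (Real.exp (qnorm Γ u * qnorm Γ⁻¹ (P.mulVec (Sᵀ.mulVec w))) - 1) :=
  stmt11_general A P Θ Γ Γh S lam hlam hP hΘ hΓ hΓh hΓhsq hS hcontr τ hτ u w
end

section
/- Let Θ be a real invertible antisymmetric matrix of order n, R a real symmetric n×n matrix, M a real m×n matrix, and J a real antisymmetric m×m matrix. Define A := 2Θ(R + MᵀJM), B := 2ΘMᵀ, C := 2JM. Then the physical realizability conditions hold: AΘ + ΘAᵀ + BJBᵀ = 0 and ΘCᵀ + BJ = 0. -/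
open Matrix

theorem stmt18 {n m : ℕ} (Θ : Matrix (Fin n) (Fin n) ℝ) (R : Matrix (Fin n) (Fin n) ℝ)
    (M : Matrix (Fin m) (Fin n) ℝ) (J : Matrix (Fin m) (Fin m) ℝ)
    (hΘ : Θᵀ = -Θ) (hΘinv : IsUnit Θ.det) (hR : Rᵀ = R) (hJ : Jᵀ = -J)
    (A : Matrix (Fin n) (Fin n) ℝ) (hA : A = 2 • (Θ * (R + Mᵀ * J * M)))
    (B : Matrix (Fin n) (Fin m) ℝ) (hB : B = 2 • (Θ * Mᵀ))
    (C : Matrix (Fin m) (Fin n) ℝ) (hC : C = 2 • (J * M)) :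
    A * Θ + Θ * Aᵀ + B * J * Bᵀ = 0 ∧ Θ * Cᵀ + B * J = 0 := by
  subst hA hB hC
  constructor <;>
  · simp only [transpose_smul, transpose_add, transpose_mul, hΘ, hR, hJ, transpose_transpose,
      Matrix.mul_add, Matrix.add_mul, Matrix.mul_neg, Matrix.neg_mul, neg_add, neg_neg,
      Matrix.mul_assoc, Matrix.smul_mul, Matrix.mul_smul, smul_neg, neg_smul, smul_add,
      smul_smul, two_smul]
    abel
end
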